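/- arXiv:1908.01044 — 5 statements merged into one kernel-verified Lean document; each statement's English description precedes it below -/
import Mathlib

section
/- Under the setup of the strong MNAR assumption (all missing values of Y fall below F^{-1}(α), and the composite variable U equals Y when observed and a constant c < F^{-1}(α) when missing), the trimmed mean of U equals the trimmed mean of Y: E[U | U > F_U^{-1}(α)] = E[Y | Y > F^{-1}(α)]. -/
open MeasureTheory ProbabilityTheory Set

noncomputable def quant (F : ℝ → ℝ) (α : ℝ) : ℝ := sInf {x | α ≤ F x}

noncomputable def condMeanAbove {Ω : Type*} [MeasurableSpace Ω]
    (μ : Measure Ω) (X : Ω → ℝ) (q : ℝ) : ℝ :=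
  (∫ ω in {ω | q < X ω}, X ω ∂μ) / (μ {ω | q < X ω}).toReal

/-!
Since `Y` has a density, its CDF is continuous, so `q := F⁻¹(α)` satisfies `F q = α`. The
missing values of `Y` and the constant `c` all lie below `q`, hence `{q < U} = {q < Y}` almost
surely and `U = Y` there; in particular `F_U q = α` as well. The α-quantile `t` of `U` may be
smaller than `q`, but `F_U t = α = F_U q`, so `U` puts no mass on `(t, q]` and the upper tails of
`U` above `t` and above `q` agree almost surely.
-/

open Filter

theorem StieltjesFunction.le_apply_quant (G : StieltjesFunction ℝ) {α : ℝ}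
    (hne : {x | α ≤ G x}.Nonempty) : α ≤ G (quant G α) := by
  have hright : ∀ x, quant G α < x → α ≤ G x := fun x hx =>
    let ⟨_, hs, hsx⟩ := exists_lt_of_csInf_lt hne hx
    hs.trans (G.mono hsx.le)
  exact ge_of_tendsto ((G.right_continuous _).mono Ioi_subset_Ici_self)
    (eventually_nhdsWithin_of_forall hright)

section cdf

variable {ν : Measure ℝ} {α : ℝ}

theorem bddBelow_setOf_le_cdf [IsProbabilityMeasure ν] (hα : 0 < α) :
    BddBelow {x | α ≤ cdf ν x} := by
  obtain ⟨B, hB⟩ := eventually_atBot.mp ((tendsto_cdf_atBot ν).eventually (Iio_mem_nhds hα))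
  exact ⟨B, fun x hx => le_of_not_ge fun hxB => (hB x hxB).not_ge hx⟩

theorem nonempty_setOf_le_cdf [IsProbabilityMeasure ν] (hα : α < 1) :
    {x | α ≤ cdf ν x}.Nonempty :=
  ((tendsto_cdf_atTop ν).eventually (Ioi_mem_nhds hα)).exists.imp fun _ hx => hx.le

theorem cdf_quant_eq [IsProbabilityMeasure ν] [NullSingletonClass ν] (hα0 : 0 < α)
    (hα1 : α < 1) :
    cdf ν (quant (cdf ν) α) = α := by
  set q := quant (cdf ν) α
  have hbd := bddBelow_setOf_le_cdf (ν := ν) hα0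
  have hleft : Function.leftLim (cdf ν) q ≤ α :=
    le_of_tendsto ((cdf ν).mono.tendsto_leftLim q) <| eventually_nhdsWithin_of_forall
      fun x hx => (not_le.mp (notMem_of_lt_csInf (s := {x | α ≤ cdf ν x}) hx hbd)).le
  have hjump : cdf ν q ≤ Function.leftLim (cdf ν) q := by
    have h := (cdf ν).measure_singleton q
    rw [measure_cdf, measure_singleton, eq_comm, ENNReal.ofReal_eq_zero] at h
    linarith
  exact le_antisymm (hjump.trans hleft)
    ((cdf ν).le_apply_quant (nonempty_setOf_le_cdf hα1))

theorem measure_Ioc_quant_eq_zero [IsProbabilityMeasure ν] {q : ℝ} (hq : cdf ν q = α) :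
    ν (Ioc (quant (cdf ν) α) q) = 0 := by
  have ht : α ≤ cdf ν (quant (cdf ν) α) := (cdf ν).le_apply_quant ⟨q, hq.ge⟩
  have h := (cdf ν).measure_Ioc (quant (cdf ν) α) q
  rw [measure_cdf] at h
  rw [h, ENNReal.ofReal_eq_zero]
  linarith

end cdf

theorem nullSingletonClass_of_measure_Iic_eq_integral {ν : Measure ℝ} [IsProbabilityMeasure ν]
    {f : ℝ → ℝ} (h : ∀ x, ν (Iic x) = ENNReal.ofReal (∫ y in Iic x, f y)) : NullSingletonClass ν := by
  refine ⟨fun q => ?_⟩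
  by_cases hf : IntegrableOn f (Iic q)
  · have hcdf : ⇑(cdf ν) = fun b => max (∫ y in Iic b, f y) 0 := funext fun b => by
      rw [cdf_eq_real, measureReal_def, h, ENNReal.toReal_ofReal']
    have hcont : ContinuousWithinAt (cdf ν) (Iic q) q := hcdf ▸
      (hf.continuousOn_Iic_primitive_Iic q self_mem_Iic).max continuousWithinAt_const
    rw [← measure_cdf ν, StieltjesFunction.measure_singleton, hcont.leftLim_eq, sub_self,
      ENNReal.ofReal_zero]
  · exact measure_mono_null (singleton_subset_iff.mpr self_mem_Iic)
      (by rw [h, integral_undef hf, ENNReal.ofReal_zero])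

section RandomVariable

variable {Ω : Type*} [MeasurableSpace Ω] {μ : Measure Ω} {X : Ω → ℝ}

theorem cdf_map_eq [IsProbabilityMeasure μ] (hX : Measurable X) :
    ⇑(cdf (μ.map X)) = fun x => (μ {ω | X ω ≤ x}).toReal := by
  have := Measure.isProbabilityMeasure_map (μ := μ) hX.aemeasurable
  ext x
  rw [cdf_eq_real, measureReal_def, Measure.map_apply hX measurableSet_Iic]
  rfl

theorem ae_eq_setOf_quant_lt [IsProbabilityMeasure μ] (hX : Measurable X) {α q : ℝ}
    (hα : 0 < α) (hq : cdf (μ.map X) q = α) :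
    {ω | quant (cdf (μ.map X)) α < X ω} =ᵐ[μ] {ω | q < X ω} := by
  have := Measure.isProbabilityMeasure_map (μ := μ) hX.aemeasurable
  have hnull : μ (X ⁻¹' Ioc (quant (cdf (μ.map X)) α) q) = 0 := by
    rw [← Measure.map_apply hX measurableSet_Ioc]
    exact measure_Ioc_quant_eq_zero hq
  have hle : quant (cdf (μ.map X)) α ≤ q :=
    csInf_le (bddBelow_setOf_le_cdf hα) hq.ge
  refine eventuallyEq_set.mpr ?_
  filter_upwards [measure_eq_zero_iff_ae_notMem.mp hnull] with ω hω
  simp only [mem_preimage, mem_Ioc, not_and, not_le] at hω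
  exact ⟨fun h => hω h, fun h => hle.trans_lt h⟩

theorem condMeanAbove_congr {X' : Ω → ℝ} {q q' : ℝ} (hX : Measurable X)
    (hs : {ω | q < X ω} =ᵐ[μ] {ω | q' < X' ω}) (heq : EqOn X X' {ω | q < X ω}) :
    condMeanAbove μ X q = condMeanAbove μ X' q' := by
  rw [condMeanAbove, condMeanAbove,
    setIntegral_congr_fun (measurableSet_lt measurable_const hX) heq, setIntegral_congr_set hs,
    measure_congr hs]

end RandomVariable

theorem stmt4_general {Ω : Type*} [MeasurableSpace Ω] (μ : Measure Ω) [IsProbabilityMeasure μ]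
    (Y : Ω → ℝ) (R : Ω → Bool) (f : ℝ → ℝ) (α c : ℝ)
    (hY : Measurable Y) (hR : Measurable R)
    (hYd : ∀ x, μ {ω | Y ω ≤ x} = ENNReal.ofReal (∫ y in Iic x, f y))
    (hα : α ∈ Ioo (0:ℝ) 1)
    (F : ℝ → ℝ) (hF : F = fun x => (μ {ω | Y ω ≤ x}).toReal)
    (hMNAR : ∀ᵐ ω ∂μ, R ω = false → Y ω < quant F α)
    (hc : c < quant F α)
    (U : Ω → ℝ) (hU : U = fun ω => if R ω then Y ω else c)
    (FU : ℝ → ℝ) (hFU : FU = fun x => (μ {ω | U ω ≤ x}).toReal) :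
    condMeanAbove μ U (quant FU α) = condMeanAbove μ Y (quant F α) := by
  have hUm : Measurable U :=
    hU ▸ Measurable.ite (hR (measurableSet_singleton true)) hY measurable_const
  rw [← cdf_map_eq hY] at hF
  rw [← cdf_map_eq hUm] at hFU
  subst hF hFU
  have := Measure.isProbabilityMeasure_map (μ := μ) hY.aemeasurable
  have : NullSingletonClass (μ.map Y) :=
    nullSingletonClass_of_measure_Iic_eq_integral (f := f) fun x => by
      rw [Measure.map_apply hY measurableSet_Iic]; exact hYd x
  set q := quant (cdf (μ.map Y)) α
  have hUY : EqOn U Y {ω | q < U ω} := fun ω (hω : q < U ω) => by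
    cases hRω : R ω <;> simp only [hU, hRω] at hω ⊢ <;> [exact absurd hω hc.not_gt; rfl]
  have htail : ∀ᵐ ω ∂μ, (q < U ω ↔ q < Y ω) := by
    filter_upwards [hMNAR] with ω hω
    cases hRω : R ω <;> simp only [hU, hRω] <;> [simp [hc.not_gt, (hω hRω).not_gt]; rfl]
  have hFUq : cdf (μ.map U) q = α := by
    have hFq := cdf_quant_eq (ν := μ.map Y) hα.1 hα.2
    have hle : μ {ω | U ω ≤ q} = μ {ω | Y ω ≤ q} := measure_congr <| eventuallyEq_set.mpr <|
      htail.mono fun ω hω => by simpa only [mem_ofPred_eq, not_lt] using not_congr hω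
    rw [congrFun (cdf_map_eq hY) q] at hFq
    rw [congrFun (cdf_map_eq hUm) q, hle, hFq]
  calc condMeanAbove μ U (quant (cdf (μ.map U)) α)
      = condMeanAbove μ U q :=
        condMeanAbove_congr hUm (ae_eq_setOf_quant_lt hUm hα.1 hFUq) fun _ _ => rfl
    _ = condMeanAbove μ Y q := condMeanAbove_congr hUm (eventuallyEq_set.mpr htail) hUY

theorem stmt4 {Ω : Type*} [MeasurableSpace Ω] (μ : Measure Ω) [IsProbabilityMeasure μ]
    (Y : Ω → ℝ) (R : Ω → Bool) (f : ℝ → ℝ) (α c : ℝ)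
    (hY : Measurable Y) (hR : Measurable R)
    (hf0 : ∀ y, 0 ≤ f y)
    (hYd : ∀ x, μ {ω | Y ω ≤ x} = ENNReal.ofReal (∫ y in Iic x, f y))
    (hmean : Integrable (fun y => y * f y))
    (hα : α ∈ Ioo (0:ℝ) 1)
    (hp : (μ {ω | R ω = false}).toReal ≤ α)
    (F : ℝ → ℝ) (hF : F = fun x => (μ {ω | Y ω ≤ x}).toReal)
    (hMNAR : ∀ᵐ ω ∂μ, R ω = false → Y ω < quant F α)
    (hc : c < quant F α)
    (U : Ω → ℝ) (hU : U = fun ω => if R ω then Y ω else c)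
    (FU : ℝ → ℝ) (hFU : FU = fun x => (μ {ω | U ω ≤ x}).toReal) :
    condMeanAbove μ U (quant FU α) = condMeanAbove μ Y (quant F α) :=
  stmt4_general μ Y R f α c hY hR hYd hα F hF hMNAR hc U hU FU hFU
end

section
/- Let Y₁, Y₀ be absolutely continuous random variables with densities f₁, f₀ (finite means) satisfying the location family assumption f₀(y) = f₁(y + Δ), and let R₁, R₀ be binary missingness indicators satisfying the strong MNAR assumption: conditional on R_a = 0, Y_a < F_a^{-1}(α) almost surely, where α > max(P(R₁=0), P(R₀=0)). Define composite outcomes U_a = Y_a if R_a = 1 and U_a = c_a otherwise with c_a < F_a^{-1}(α). Then E[U₁ | U₁ > F_{U₁}^{-1}(α)] − E[U₀ | U₀ > F_{U₀}^{-1}(α)] = E[Y₁] − E[Y₀]. -/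
open MeasureTheory ProbabilityTheory Set

/-!
Let `q` be the `α`-quantile of `Y`. Missing outcomes lie below `q` and are imputed below it, so
up to a null set `{U > q_U}` contains `{Y > q}`, where `q_U ≤ q` is the `α`-quantile of `U`.
The first event has probability at most `1 - α`, the second exactly `1 - α` since `Y` has no
atoms; hence they agree almost surely, and on them `U = Y`: each trimmed mean is `E[Y | Y > q]`.
The location shift makes `Y₀` distributed as `Y₁ - Δ`, so `q₀ = q₁ - Δ`, and both the tail
means and the means differ by `Δ`.
-/

open Filter

theorem StieltjesFunction.quant_le_iff (F : StieltjesFunction ℝ) {α x : ℝ}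
    (hne : ∃ y, α ≤ F y) (hlt : ∃ y, F y < α) : quant F α ≤ x ↔ α ≤ F x := by
  obtain ⟨z, hz⟩ := hlt
  have hbdd : BddBelow {y | α ≤ F y} :=
    ⟨z, fun y hy => le_of_not_ge fun hyz => (hz.trans_le' (F.mono hyz)).not_ge hy⟩
  refine ⟨fun hq => ?_, fun hx => csInf_le hbdd hx⟩
  have hgt : ∀ y, x < y → α ≤ F y := fun y hxy => by
    obtain ⟨s, hs, hsy⟩ := exists_lt_of_csInf_lt hne (hq.trans_lt hxy)
    exact le_trans hs (F.mono hsy.le)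
  exact ge_of_tendsto ((F.right_continuous x).mono Ioi_subset_Ici_self)
    (eventually_nhdsWithin_of_forall hgt)

theorem ProbabilityTheory.quant_cdf_le_iff (ν : Measure ℝ) [IsProbabilityMeasure ν] {α x : ℝ}
    (hα : α ∈ Ioo 0 1) : quant (cdf ν) α ≤ x ↔ α ≤ cdf ν x :=
  (cdf ν).quant_le_iff ((tendsto_cdf_atTop ν).eventually (eventually_ge_nhds hα.2)).exists
    ((tendsto_cdf_atBot ν).eventually (eventually_lt_nhds hα.1)).exists

theorem ProbabilityTheory.cdf_quant_cdf (ν : Measure ℝ) [IsProbabilityMeasure ν]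
    [NullSingletonClass ν] {α : ℝ} (hα : α ∈ Ioo 0 1) : cdf ν (quant (cdf ν) α) = α := by
  set q := quant (cdf ν) α
  have hleft : Function.leftLim (cdf ν) q ≤ α :=
    le_of_tendsto ((cdf ν).mono.tendsto_leftLim q) <| eventually_nhdsWithin_of_forall
      fun y hy => (lt_of_not_ge fun h => hy.not_ge ((quant_cdf_le_iff ν hα).mpr h)).le
  have hatom : cdf ν q ≤ Function.leftLim (cdf ν) q := by
    have hq := (cdf ν).measure_singleton q
    rw [measure_cdf, measure_singleton, eq_comm, ENNReal.ofReal_eq_zero] at hq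
    linarith
  exact le_antisymm (hatom.trans hleft) ((quant_cdf_le_iff ν hα).mp le_rfl)

theorem integral_Iic_comp_add_right {E : Type*} [NormedAddCommGroup E] [NormedSpace ℝ E]
    (f : ℝ → E) (Δ x : ℝ) : ∫ y in Iic x, f (y + Δ) = ∫ y in Iic (x + Δ), f y := by
  have h := (measurePreserving_add_right volume Δ).setIntegral_preimage_emb
    (measurableEmbedding_addRight Δ) f (Iic (x + Δ))
  rwa [preimage_add_const_Iic, add_sub_cancel_right] at h

section Density

variable {ν : Measure ℝ} [IsProbabilityMeasure ν] {f : ℝ → ℝ}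

theorem integrableOn_Iic_of_measure_Iic_eq
    (h : ∀ x, ν (Iic x) = ENNReal.ofReal (∫ y in Iic x, f y)) (x : ℝ) :
    IntegrableOn f (Iic x) := by
  by_contra hx
  -- Otherwise the junk value `0` of the integral would give `ν (Iic y) = 0` for all `y ≥ x`.
  have hzero : ∀ y, x ≤ y → ν (Iic y) = 0 := fun y hxy => by
    have hjunk : ∫ z in Iic y, f z = 0 :=
      integral_undef fun hy => hx (IntegrableOn.mono_set hy (Iic_subset_Iic.mpr hxy))
    rw [h, hjunk, ENNReal.ofReal_zero]
  have hlim := tendsto_measure_Iic_atTop ν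
  rw [measure_univ] at hlim
  exact one_ne_zero <| tendsto_nhds_unique hlim <|
    tendsto_const_nhds.congr' ((eventually_ge_atTop x).mono fun y hy => (hzero y hy).symm)

theorem eq_withDensity_of_measure_Iic_eq (hf : ∀ y, 0 ≤ f y)
    (h : ∀ x, ν (Iic x) = ENNReal.ofReal (∫ y in Iic x, f y)) :
    ν = volume.withDensity fun y => ENNReal.ofReal (f y) :=
  Measure.ext_of_Iic _ _ fun x => by
    rw [h, withDensity_apply _ measurableSet_Iic, ofReal_integral_eq_lintegral_ofReal
      (integrableOn_Iic_of_measure_Iic_eq h x) (ae_of_all _ hf)]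

theorem integrable_id_of_measure_Iic_eq (hf : ∀ y, 0 ≤ f y)
    (h : ∀ x, ν (Iic x) = ENNReal.ofReal (∫ y in Iic x, f y))
    (hm : Integrable fun y => y * f y) : Integrable id ν := by
  have hfm : AEMeasurable f := by
    have hcover : (⋃ n : ℕ, Iic (n : ℝ)) = univ := iUnion_eq_univ_iff.2 exists_nat_ge
    rw [← Measure.restrict_univ (μ := volume), ← hcover]
    exact aemeasurable_iUnion_iff.2 fun n => (integrableOn_Iic_of_measure_Iic_eq h n).aemeasurable
  rw [eq_withDensity_of_measure_Iic_eq hf h, integrable_withDensity_iff_integrable_smul₀'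
    hfm.ennreal_ofReal (ae_of_all _ fun _ => ENNReal.ofReal_lt_top)]
  refine hm.congr (ae_of_all _ fun y => ?_)
  simp [ENNReal.toReal_ofReal (hf y), mul_comm]

end Density

theorem setIntegral_lt_eq_setIntegral_Ioi_map {Ω : Type*} [MeasurableSpace Ω] {μ : Measure Ω}
    {X : Ω → ℝ} (hX : AEMeasurable X μ) (q : ℝ) :
    ∫ ω in {ω | q < X ω}, X ω ∂μ = ∫ y in Ioi q, y ∂μ.map X :=
  (setIntegral_map measurableSet_Ioi aestronglyMeasurable_id hX).symm

theorem ProbabilityTheory.IdentDistrib.condMeanAbove_eq {Ω Ω' : Type*} [MeasurableSpace Ω]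
    [MeasurableSpace Ω'] {μ : Measure Ω} {μ' : Measure Ω'} {X : Ω → ℝ} {X' : Ω' → ℝ}
    (h : IdentDistrib X X' μ μ') (q : ℝ) : condMeanAbove μ X q = condMeanAbove μ' X' q := by
  rw [condMeanAbove, condMeanAbove, setIntegral_lt_eq_setIntegral_Ioi_map h.aemeasurable_fst,
    setIntegral_lt_eq_setIntegral_Ioi_map h.aemeasurable_snd, h.map_eq]
  exact congrArg _ (congrArg _ (h.measure_mem_eq measurableSet_Ioi))

theorem condMeanAbove_sub_const {Ω : Type*} [MeasurableSpace Ω] {μ : Measure Ω}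
    [IsFiniteMeasure μ] {X : Ω → ℝ} {q : ℝ} (hX : IntegrableOn X {ω | q < X ω} μ)
    (hq : μ {ω | q < X ω} ≠ 0) (Δ : ℝ) :
    condMeanAbove μ (fun ω => X ω - Δ) (q - Δ) = condMeanAbove μ X q - Δ := by
  have hset : {ω | q - Δ < X ω - Δ} = {ω | q < X ω} := by simp
  have hpos : (μ {ω | q < X ω}).toReal ≠ 0 := ENNReal.toReal_ne_zero.mpr ⟨hq, measure_ne_top μ _⟩
  rw [condMeanAbove, condMeanAbove, hset,
    integral_sub hX (integrableOn_const (measure_ne_top μ _)), setIntegral_const, smul_eq_mul,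
    measureReal_def]
  field_simp

section ProbabilitySpace

variable {Ω : Type*} [MeasurableSpace Ω] {μ : Measure Ω} [IsProbabilityMeasure μ]

theorem toReal_measure_le_eq_cdf_map {X : Ω → ℝ} (hX : Measurable X) :
    (fun x => (μ {ω | X ω ≤ x}).toReal) = cdf (μ.map X) := by
  have := Measure.isProbabilityMeasure_map (μ := μ) hX.aemeasurable
  ext x
  rw [cdf_eq_real, measureReal_def, Measure.map_apply hX measurableSet_Iic]
  rfl

theorem ofReal_le_measure_le_quant_cdf_map {X : Ω → ℝ} (hX : Measurable X) {α : ℝ}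
    (hα : α ∈ Ioo 0 1) : ENNReal.ofReal α ≤ μ {ω | X ω ≤ quant (cdf (μ.map X)) α} := by
  have := Measure.isProbabilityMeasure_map (μ := μ) hX.aemeasurable
  change _ ≤ μ (X ⁻¹' Iic _)
  rw [← Measure.map_apply hX measurableSet_Iic, ← ofReal_cdf]
  exact ENNReal.ofReal_le_ofReal ((quant_cdf_le_iff _ hα).mp le_rfl)

theorem measure_le_quant_cdf_map {X : Ω → ℝ} (hX : Measurable X) [NullSingletonClass (μ.map X)]
    {α : ℝ} (hα : α ∈ Ioo 0 1) :
    μ {ω | X ω ≤ quant (cdf (μ.map X)) α} = ENNReal.ofReal α := by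
  have := Measure.isProbabilityMeasure_map (μ := μ) hX.aemeasurable
  change μ (X ⁻¹' Iic _) = _
  rw [← Measure.map_apply hX measurableSet_Iic, ← ofReal_cdf, cdf_quant_cdf _ hα]

theorem measure_lt_eq_one_sub {X : Ω → ℝ} (hX : Measurable X) (t : ℝ) :
    μ {ω | t < X ω} = 1 - μ {ω | X ω ≤ t} := by
  change μ (X ⁻¹' Ioi t) = 1 - μ (X ⁻¹' Iic t)
  rw [← prob_compl_eq_one_sub (hX measurableSet_Iic), ← preimage_compl, compl_Iic]

theorem measure_quant_cdf_map_lt {X : Ω → ℝ} (hX : Measurable X) [NullSingletonClass (μ.map X)]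
    {α : ℝ} (hα : α ∈ Ioo 0 1) :
    μ {ω | quant (cdf (μ.map X)) α < X ω} = ENNReal.ofReal (1 - α) := by
  rw [measure_lt_eq_one_sub hX, measure_le_quant_cdf_map hX hα, ENNReal.ofReal_sub _ hα.1.le,
    ENNReal.ofReal_one]

theorem nullSingletonClass_map_of_measure_le_eq {Y : Ω → ℝ} {f : ℝ → ℝ} (hY : Measurable Y)
    (hf : ∀ y, 0 ≤ f y) (hYd : ∀ x, μ {ω | Y ω ≤ x} = ENNReal.ofReal (∫ y in Iic x, f y)) :
    NullSingletonClass (μ.map Y) := by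
  have := Measure.isProbabilityMeasure_map (μ := μ) hY.aemeasurable
  rw [eq_withDensity_of_measure_Iic_eq hf fun x => (Measure.map_apply hY measurableSet_Iic).trans
    (hYd x)]
  infer_instance

theorem integrable_of_measure_le_eq {Y : Ω → ℝ} {f : ℝ → ℝ} (hY : Measurable Y)
    (hf : ∀ y, 0 ≤ f y) (hYd : ∀ x, μ {ω | Y ω ≤ x} = ENNReal.ofReal (∫ y in Iic x, f y))
    (hm : Integrable fun y => y * f y) : Integrable Y μ := by
  have := Measure.isProbabilityMeasure_map (μ := μ) hY.aemeasurable
  exact (integrable_map_measure aestronglyMeasurable_id hY.aemeasurable).mp <|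
    integrable_id_of_measure_Iic_eq hf
      (fun x => (Measure.map_apply hY measurableSet_Iic).trans (hYd x)) hm

theorem identDistrib_sub_const_of_density_shift {Y₁ Y₀ : Ω → ℝ} {f₁ f₀ : ℝ → ℝ} {Δ : ℝ}
    (hY₁ : Measurable Y₁) (hY₀ : Measurable Y₀)
    (hY₁d : ∀ x, μ {ω | Y₁ ω ≤ x} = ENNReal.ofReal (∫ y in Iic x, f₁ y))
    (hY₀d : ∀ x, μ {ω | Y₀ ω ≤ x} = ENNReal.ofReal (∫ y in Iic x, f₀ y))
    (hshift : ∀ y, f₀ y = f₁ (y + Δ)) : IdentDistrib Y₀ (fun ω => Y₁ ω - Δ) μ μ where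
  aemeasurable_fst := hY₀.aemeasurable
  aemeasurable_snd := (hY₁.sub_const Δ).aemeasurable
  map_eq := Measure.ext_of_Iic _ _ fun x => by
    rw [Measure.map_apply hY₀ measurableSet_Iic,
      Measure.map_apply (hY₁.sub_const Δ) measurableSet_Iic]
    change μ {ω | Y₀ ω ≤ x} = μ {ω | Y₁ ω - Δ ≤ x}
    simp_rw [sub_le_iff_le_add, hY₀d, hY₁d, hshift, integral_Iic_comp_add_right]

theorem quant_cdf_map_sub_const {X : Ω → ℝ} (hX : Measurable X) {α : ℝ} (hα : α ∈ Ioo 0 1)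
    (Δ : ℝ) : quant (cdf (μ.map fun ω => X ω - Δ)) α = quant (cdf (μ.map X)) α - Δ := by
  have hXΔ := hX.sub_const Δ
  have := Measure.isProbabilityMeasure_map (μ := μ) hX.aemeasurable
  have := Measure.isProbabilityMeasure_map (μ := μ) hXΔ.aemeasurable
  refine eq_of_forall_ge_iff fun x => ?_
  rw [quant_cdf_le_iff _ hα, sub_le_iff_le_add, quant_cdf_le_iff _ hα,
    ← toReal_measure_le_eq_cdf_map hX, ← toReal_measure_le_eq_cdf_map hXΔ]
  simp only [sub_le_iff_le_add]

theorem measurable_ite_bool_const {Y : Ω → ℝ} {R : Ω → Bool} (hY : Measurable Y)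
    (hR : Measurable R) (c : ℝ) : Measurable fun ω => if R ω then Y ω else c :=
  Measurable.ite (hR (measurableSet_singleton true)) hY measurable_const

theorem condMeanAbove_quant_imputed_eq {Y : Ω → ℝ} {R : Ω → Bool} {α c : ℝ}
    (hY : Measurable Y) (hR : Measurable R) [NullSingletonClass (μ.map Y)] (hα : α ∈ Ioo 0 1)
    (hMNAR : ∀ᵐ ω ∂μ, R ω = false → Y ω < quant (cdf (μ.map Y)) α)
    (hc : c < quant (cdf (μ.map Y)) α) :
    condMeanAbove μ (fun ω => if R ω then Y ω else c)
        (quant (cdf (μ.map fun ω => if R ω then Y ω else c)) α) =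
      condMeanAbove μ Y (quant (cdf (μ.map Y)) α) := by
  set U := fun ω => if R ω then Y ω else c
  set q := quant (cdf (μ.map Y)) α
  set q' := quant (cdf (μ.map U)) α
  have hU : Measurable U := measurable_ite_bool_const hY hR c
  have := Measure.isProbabilityMeasure_map (μ := μ) hU.aemeasurable
  have hq'q : q' ≤ q := by
    rw [quant_cdf_le_iff _ hα, ← ENNReal.ofReal_le_ofReal_iff (cdf_nonneg _ _), ofReal_cdf,
      Measure.map_apply hU measurableSet_Iic, ← measure_le_quant_cdf_map (μ := μ) hY hα]
    refine measure_mono fun ω (hω : Y ω ≤ q) => ?_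
    cases hR : R ω <;> simp [U, hR, hc.le, hω]
  have hobs : ∀ᵐ ω ∂μ, q < Y ω → U ω = Y ω := by
    filter_upwards [hMNAR] with ω hω hqY
    cases hR : R ω
    · exact absurd (hω hR) hqY.not_gt
    · simp [U, hR]
  have hsub : {ω | q < Y ω} ≤ᵐ[μ] {ω | q' < U ω} := by
    filter_upwards [hobs] with ω hω (hqY : q < Y ω)
    show q' < U ω
    rw [hω hqY]
    exact hq'q.trans_lt hqY
  have hle : μ {ω | q' < U ω} ≤ μ {ω | q < Y ω} := by
    rw [measure_lt_eq_one_sub hU, measure_lt_eq_one_sub hY, measure_le_quant_cdf_map hY hα]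
    exact tsub_le_tsub_left (ofReal_le_measure_le_quant_cdf_map hU hα) 1
  have htail : {ω | q' < U ω} =ᵐ[μ] {ω | q < Y ω} :=
    (ae_eq_of_ae_subset_of_measure_ge hsub hle (hY measurableSet_Ioi).nullMeasurableSet
      (measure_ne_top μ _)).symm
  rw [condMeanAbove, condMeanAbove, measure_congr htail, setIntegral_congr_set htail]
  exact congrArg (· / _) (setIntegral_congr_ae (hY measurableSet_Ioi) hobs)

end ProbabilitySpace

theorem stmt5_general {Ω : Type*} [MeasurableSpace Ω] (μ : Measure Ω) [IsProbabilityMeasure μ]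
    (Y₁ Y₀ : Ω → ℝ) (R₁ R₀ : Ω → Bool) (f₁ f₀ : ℝ → ℝ) (Δ α c₁ c₀ : ℝ)
    (hY₁ : Measurable Y₁) (hY₀ : Measurable Y₀) (hR₁ : Measurable R₁) (hR₀ : Measurable R₀)
    (hf₁0 : ∀ y, 0 ≤ f₁ y) (hf₀0 : ∀ y, 0 ≤ f₀ y)
    (hY₁d : ∀ x, μ {ω | Y₁ ω ≤ x} = ENNReal.ofReal (∫ y in Iic x, f₁ y))
    (hY₀d : ∀ x, μ {ω | Y₀ ω ≤ x} = ENNReal.ofReal (∫ y in Iic x, f₀ y))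
    (hm₁ : Integrable (fun y => y * f₁ y))
    (hshift : ∀ y, f₀ y = f₁ (y + Δ))
    (hα : α ∈ Ioo (0:ℝ) 1)
    (F₁ F₀ : ℝ → ℝ)
    (hF₁ : F₁ = fun x => (μ {ω | Y₁ ω ≤ x}).toReal)
    (hF₀ : F₀ = fun x => (μ {ω | Y₀ ω ≤ x}).toReal)
    (hMNAR₁ : ∀ᵐ ω ∂μ, R₁ ω = false → Y₁ ω < quant F₁ α)
    (hMNAR₀ : ∀ᵐ ω ∂μ, R₀ ω = false → Y₀ ω < quant F₀ α)
    (hc₁ : c₁ < quant F₁ α) (hc₀ : c₀ < quant F₀ α)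
    (U₁ U₀ : Ω → ℝ)
    (hU₁ : U₁ = fun ω => if R₁ ω then Y₁ ω else c₁)
    (hU₀ : U₀ = fun ω => if R₀ ω then Y₀ ω else c₀)
    (FU₁ FU₀ : ℝ → ℝ)
    (hFU₁ : FU₁ = fun x => (μ {ω | U₁ ω ≤ x}).toReal)
    (hFU₀ : FU₀ = fun x => (μ {ω | U₀ ω ≤ x}).toReal) :
    condMeanAbove μ U₁ (quant FU₁ α) - condMeanAbove μ U₀ (quant FU₀ α)
      = (∫ ω, Y₁ ω ∂μ) - ∫ ω, Y₀ ω ∂μ := by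
  subst hU₁ hU₀
  have := nullSingletonClass_map_of_measure_le_eq hY₁ hf₁0 hY₁d
  have := nullSingletonClass_map_of_measure_le_eq hY₀ hf₀0 hY₀d
  have hint : Integrable Y₁ μ := integrable_of_measure_le_eq hY₁ hf₁0 hY₁d hm₁
  have hid := identDistrib_sub_const_of_density_shift hY₁ hY₀ hY₁d hY₀d hshift
  rw [toReal_measure_le_eq_cdf_map hY₁] at hF₁
  rw [toReal_measure_le_eq_cdf_map hY₀] at hF₀
  rw [toReal_measure_le_eq_cdf_map (measurable_ite_bool_const hY₁ hR₁ c₁)] at hFU₁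
  rw [toReal_measure_le_eq_cdf_map (measurable_ite_bool_const hY₀ hR₀ c₀)] at hFU₀
  subst hF₁ hF₀ hFU₁ hFU₀
  have hq₀ : quant (cdf (μ.map Y₀)) α = quant (cdf (μ.map Y₁)) α - Δ := by
    rw [hid.map_eq, quant_cdf_map_sub_const hY₁ hα]
  have htail : μ {ω | quant (cdf (μ.map Y₁)) α < Y₁ ω} ≠ 0 := by
    simp [measure_quant_cdf_map_lt hY₁ hα, hα.2]
  rw [condMeanAbove_quant_imputed_eq hY₁ hR₁ hα hMNAR₁ hc₁,
    condMeanAbove_quant_imputed_eq hY₀ hR₀ hα hMNAR₀ hc₀, hq₀, hid.condMeanAbove_eq,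
    condMeanAbove_sub_const hint.integrableOn htail, hid.integral_eq,
    integral_sub hint (integrable_const Δ)]
  simp

theorem stmt5 {Ω : Type*} [MeasurableSpace Ω] (μ : Measure Ω) [IsProbabilityMeasure μ]
    (Y₁ Y₀ : Ω → ℝ) (R₁ R₀ : Ω → Bool) (f₁ f₀ : ℝ → ℝ) (Δ α c₁ c₀ : ℝ)
    (hY₁ : Measurable Y₁) (hY₀ : Measurable Y₀) (hR₁ : Measurable R₁) (hR₀ : Measurable R₀)
    (hf₁0 : ∀ y, 0 ≤ f₁ y) (hf₀0 : ∀ y, 0 ≤ f₀ y)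
    (hY₁d : ∀ x, μ {ω | Y₁ ω ≤ x} = ENNReal.ofReal (∫ y in Iic x, f₁ y))
    (hY₀d : ∀ x, μ {ω | Y₀ ω ≤ x} = ENNReal.ofReal (∫ y in Iic x, f₀ y))
    (hm₁ : Integrable (fun y => y * f₁ y)) (hm₀ : Integrable (fun y => y * f₀ y))
    (hshift : ∀ y, f₀ y = f₁ (y + Δ))
    (hα : α ∈ Ioo (0:ℝ) 1)
    (hp₁ : (μ {ω | R₁ ω = false}).toReal < α)
    (hp₀ : (μ {ω | R₀ ω = false}).toReal < α)
    (F₁ F₀ : ℝ → ℝ)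
    (hF₁ : F₁ = fun x => (μ {ω | Y₁ ω ≤ x}).toReal)
    (hF₀ : F₀ = fun x => (μ {ω | Y₀ ω ≤ x}).toReal)
    (hMNAR₁ : ∀ᵐ ω ∂μ, R₁ ω = false → Y₁ ω < quant F₁ α)
    (hMNAR₀ : ∀ᵐ ω ∂μ, R₀ ω = false → Y₀ ω < quant F₀ α)
    (hc₁ : c₁ < quant F₁ α) (hc₀ : c₀ < quant F₀ α)
    (U₁ U₀ : Ω → ℝ)
    (hU₁ : U₁ = fun ω => if R₁ ω then Y₁ ω else c₁)
    (hU₀ : U₀ = fun ω => if R₀ ω then Y₀ ω else c₀)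
    (FU₁ FU₀ : ℝ → ℝ)
    (hFU₁ : FU₁ = fun x => (μ {ω | U₁ ω ≤ x}).toReal)
    (hFU₀ : FU₀ = fun x => (μ {ω | U₀ ω ≤ x}).toReal) :
    condMeanAbove μ U₁ (quant FU₁ α) - condMeanAbove μ U₀ (quant FU₀ α)
      = (∫ ω, Y₁ ω ∂μ) - ∫ ω, Y₀ ω ∂μ :=
  stmt5_general μ Y₁ Y₀ R₁ R₀ f₁ f₀ Δ α c₁ c₀ hY₁ hY₀ hR₁ hR₀ hf₁0 hf₀0 hY₁d hY₀d hm₁ hshift hα F₁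
    F₀ hF₁ hF₀ hMNAR₁ hMNAR₀ hc₁ hc₀ U₁ U₀ hU₁ hU₀ FU₁ FU₀ hFU₁ hFU₀
end

section
/- Let F₁ and F₀ be absolutely continuous CDFs on ℝ with densities f₁, f₀ and finite means. If there exists Δ ∈ ℝ such that for all α ∈ (0,1), E[Y₁ | Y₁ > F₁^{-1}(α)] − E[Y₀ | Y₀ > F₀^{-1}(α)] = Δ, then F₀^{-1}(α) = F₁^{-1}(α) − Δ for all α ∈ (0,1), i.e., the two distributions are a location shift of one another: f₀(y) = f₁(y + Δ) almost everywhere. -/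
open MeasureTheory Set Filter Topology

noncomputable def cdfOf (f : ℝ → ℝ) (x : ℝ) : ℝ := ∫ y in Iic x, f y
noncomputable def trimMean (f : ℝ → ℝ) (α : ℝ) : ℝ :=
  (1 - α)⁻¹ * ∫ y in Ioi (quant (cdfOf f) α), y * f y

namespace Stmt6Aux

variable {f : ℝ → ℝ}

lemma integrable_of_one (hf1 : ∫ y, f y = 1) : Integrable f := by
  by_contra h
  rw [integral_undef h] at hf1
  norm_num at hf1

lemma cdf_mono (hf0 : ∀ y, 0 ≤ f y) (hfi : Integrable f) : Monotone (cdfOf f) := by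
  intro a b hab
  exact setIntegral_mono_set hfi.integrableOn (ae_of_all _ hf0)
    (HasSubset.Subset.eventuallyLE (Iic_subset_Iic.2 hab))

lemma cdf_continuous (hfi : Integrable f) : Continuous (cdfOf f) := by
  have h : ∀ x, cdfOf f x = cdfOf f 0 + ∫ t in (0:ℝ)..x, f t := by
    intro x
    rw [← intervalIntegral.integral_Iic_sub_Iic hfi.integrableOn hfi.integrableOn]
    simp [cdfOf]
  have hc : Continuous fun x => cdfOf f 0 + ∫ t in (0:ℝ)..x, f t :=
    continuous_const.add
      (intervalIntegral.continuous_primitive (fun a b => hfi.intervalIntegrable) 0)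
  exact hc.congr fun x => (h x).symm

lemma cdf_nonneg (hf0 : ∀ y, 0 ≤ f y) (x : ℝ) : 0 ≤ cdfOf f x :=
  setIntegral_nonneg measurableSet_Iic fun y _ => hf0 y

lemma cdf_le_one (hf0 : ∀ y, 0 ≤ f y) (hf1 : ∫ y, f y = 1) (x : ℝ) : cdfOf f x ≤ 1 := by
  rw [← hf1]
  exact setIntegral_le_integral (integrable_of_one hf1) (ae_of_all _ hf0)

lemma cdf_tendsto_atTop (hfi : Integrable f) :
    Tendsto (cdfOf f) atTop (𝓝 (∫ y, f y)) :=
  (aecover_Iic tendsto_id).integral_tendsto_of_countably_generated hfi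

lemma cdf_tendsto_atBot (hfi : Integrable f) : Tendsto (cdfOf f) atBot (𝓝 0) := by
  have h := (aecover_Ioi (μ := (volume : Measure ℝ)) tendsto_id).integral_tendsto_of_countably_generated hfi
  have heq : cdfOf f = fun x => (∫ y, f y) - ∫ y in Ioi x, f y := by
    funext x
    rw [eq_sub_iff_add_eq]
    exact intervalIntegral.integral_Iic_add_Ioi hfi.integrableOn hfi.integrableOn
  rw [heq]
  have h2 : Tendsto (fun x : ℝ => (∫ y, f y) - ∫ y in Ioi x, f y) atBot
      (𝓝 ((∫ y, f y) - ∫ y, f y)) := tendsto_const_nhds.sub h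
  simpa using h2

variable (hf0 : ∀ y, 0 ≤ f y) (hf1 : ∫ y, f y = 1)

include hf0 hf1

lemma quant_set_nonempty {α : ℝ} (hα : α < 1) : {x | α ≤ cdfOf f x}.Nonempty := by
  have h := cdf_tendsto_atTop (integrable_of_one hf1)
  rw [hf1] at h
  exact (h.eventually (eventually_ge_nhds hα)).exists

lemma quant_set_bddBelow {α : ℝ} (hα : 0 < α) : BddBelow {x | α ≤ cdfOf f x} := by
  have h := cdf_tendsto_atBot (integrable_of_one hf1)
  obtain ⟨x₀, hx₀⟩ := (h.eventually (eventually_lt_nhds hα)).exists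
  refine ⟨x₀, fun x hx => ?_⟩
  by_contra hc
  push_neg at hc
  exact absurd (le_trans hx (cdf_mono hf0 (integrable_of_one hf1) hc.le)) (not_le.2 hx₀)

lemma cdf_quant {α : ℝ} (hα : α ∈ Ioo (0:ℝ) 1) : cdfOf f (quant (cdfOf f) α) = α := by
  have hfi := integrable_of_one hf1
  have hclosed : IsClosed {x | α ≤ cdfOf f x} :=
    isClosed_le continuous_const (cdf_continuous hfi)
  have hne := quant_set_nonempty hf0 hf1 hα.2
  have hbdd := quant_set_bddBelow hf0 hf1 hα.1
  have hmem : quant (cdfOf f) α ∈ {x | α ≤ cdfOf f x} := hclosed.csInf_mem hne hbdd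
  refine le_antisymm ?_ hmem
  by_contra hlt
  push_neg at hlt
  have hev : ∀ᶠ x in 𝓝 (quant (cdfOf f) α), α < cdfOf f x :=
    (cdf_continuous hfi).continuousAt.eventually (eventually_gt_nhds hlt)
  have hev' := hev.filter_mono (nhdsWithin_le_nhds (s := Iio (quant (cdfOf f) α)))
  obtain ⟨z, hz1, hz2⟩ := (hev'.and (eventually_mem_nhdsWithin
      (s := Iio (quant (cdfOf f) α)) (a := quant (cdfOf f) α))).exists
  exact absurd (csInf_le hbdd hz1.le) (not_le.2 hz2)
  
lemma quant_le_iff {α y : ℝ} (hα : α ∈ Ioo (0:ℝ) 1) :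
    quant (cdfOf f) α ≤ y ↔ α ≤ cdfOf f y := by
  constructor
  · intro h
    calc α = cdfOf f (quant (cdfOf f) α) := (cdf_quant hf0 hf1 hα).symm
    _ ≤ cdfOf f y := cdf_mono hf0 (integrable_of_one hf1) h
  · intro h
    exact csInf_le (quant_set_bddBelow hf0 hf1 hα.1) h

lemma quant_mono {α β : ℝ} (hα : 0 < α) (hβ : β < 1) (hab : α ≤ β) :
    quant (cdfOf f) α ≤ quant (cdfOf f) β :=
  csInf_le_csInf (quant_set_bddBelow hf0 hf1 hα) (quant_set_nonempty hf0 hf1 hβ)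
    (fun _ hx => le_trans hab hx)

lemma quant_near_left {β ε : ℝ} (hβ : β ∈ Ioo (0:ℝ) 1) (hε : 0 < ε) :
    ∃ α ∈ Ioo (0:ℝ) β, quant (cdfOf f) β - ε < quant (cdfOf f) α := by
  by_contra h
  push_neg at h
  set c := cdfOf f (quant (cdfOf f) β - ε) with hc
  have hcβ : β ≤ c := by
    by_contra hc'
    push_neg at hc'
    have hmax : max c 0 < β := max_lt hc' hβ.1
    obtain ⟨a, ha1, ha2⟩ := exists_between hmax
    have ha0 : 0 < a := lt_of_le_of_lt (le_max_right c 0) ha1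
    have hca : c < a := lt_of_le_of_lt (le_max_left c 0) ha1
    have hqa : quant (cdfOf f) a ≤ quant (cdfOf f) β - ε := h a ⟨ha0, ha2⟩
    have : a ≤ c := by
      calc a = cdfOf f (quant (cdfOf f) a) :=
            (cdf_quant hf0 hf1 ⟨ha0, ha2.trans hβ.2⟩).symm
      _ ≤ c := cdf_mono hf0 (integrable_of_one hf1) hqa
    exact absurd this (not_le.2 hca)
  have : quant (cdfOf f) β ≤ quant (cdfOf f) β - ε :=
    csInf_le (quant_set_bddBelow hf0 hf1 hβ.1) hcβ
  linarith

lemma mass_Ioc (hm : Integrable fun y => y * f y) {α β : ℝ}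
    (hα : α ∈ Ioo (0:ℝ) 1) (hβ : β ∈ Ioo (0:ℝ) 1) (hab : α ≤ β) :
    (∫ y in Ioc (quant (cdfOf f) α) (quant (cdfOf f) β), f y) = β - α := by
  have hq : quant (cdfOf f) α ≤ quant (cdfOf f) β := quant_mono hf0 hf1 hα.1 hβ.2 hab
  have hfi := integrable_of_one hf1
  have hsplit : (∫ y in Iic (quant (cdfOf f) β), f y)
      = (∫ y in Iic (quant (cdfOf f) α), f y)
        + ∫ y in Ioc (quant (cdfOf f) α) (quant (cdfOf f) β), f y := by
    rw [← setIntegral_union (Iic_disjoint_Ioc le_rfl) measurableSet_Ioc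
      hfi.integrableOn hfi.integrableOn, Iic_union_Ioc_eq_Iic hq]
  have h1 : cdfOf f (quant (cdfOf f) α) = α := cdf_quant hf0 hf1 hα
  have h2 : cdfOf f (quant (cdfOf f) β) = β := cdf_quant hf0 hf1 hβ
  simp only [cdfOf] at h1 h2
  rw [h1, h2] at hsplit
  linarith

lemma key_bounds (hm : Integrable fun y => y * f y) {α β : ℝ}
    (hα : α ∈ Ioo (0:ℝ) 1) (hβ : β ∈ Ioo (0:ℝ) 1) (hab : α < β) :
    quant (cdfOf f) α * (β - α) ≤
      (∫ y in Ioi (quant (cdfOf f) α), y * f y)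
        - ∫ y in Ioi (quant (cdfOf f) β), y * f y ∧
    (∫ y in Ioi (quant (cdfOf f) α), y * f y)
        - ∫ y in Ioi (quant (cdfOf f) β), y * f y ≤ quant (cdfOf f) β * (β - α) := by
  set qa := quant (cdfOf f) α with hqa
  set qb := quant (cdfOf f) β with hqb
  have hq : qa ≤ qb := quant_mono hf0 hf1 hα.1 hβ.2 hab.le
  have hfi := integrable_of_one hf1
  have hsplit : (∫ y in Ioi qa, y * f y)
      = (∫ y in Ioc qa qb, y * f y) + ∫ y in Ioi qb, y * f y := by
    rw [← setIntegral_union (Ioc_disjoint_Ioi le_rfl) measurableSet_Ioi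
      hm.integrableOn hm.integrableOn, Ioc_union_Ioi_eq_Ioi hq]
  have hmass := mass_Ioc hf0 hf1 hm hα hβ hab.le
  rw [← hqa, ← hqb] at hmass
  constructor
  · have hlow : (∫ y in Ioc qa qb, qa * f y) ≤ ∫ y in Ioc qa qb, y * f y := by
      refine setIntegral_mono_on (hfi.integrableOn.const_mul qa) hm.integrableOn
        measurableSet_Ioc fun y hy => ?_
      exact mul_le_mul_of_nonneg_right hy.1.le (hf0 y)
    rw [integral_const_mul, hmass] at hlow
    linarith
  · have hhigh : (∫ y in Ioc qa qb, y * f y) ≤ ∫ y in Ioc qa qb, qb * f y := by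
      refine setIntegral_mono_on hm.integrableOn (hfi.integrableOn.const_mul qb)
        measurableSet_Ioc fun y hy => ?_
      exact mul_le_mul_of_nonneg_right hy.2 (hf0 y)
    rw [integral_const_mul, hmass] at hhigh
    linarith

end Stmt6Aux

theorem stmt6 (f₀ f₁ : ℝ → ℝ) (Δ : ℝ)
    (hf₀0 : ∀ y, 0 ≤ f₀ y) (hf₀1 : ∫ y, f₀ y = 1)
    (hf₁0 : ∀ y, 0 ≤ f₁ y) (hf₁1 : ∫ y, f₁ y = 1)
    (hm₀ : Integrable (fun y => y * f₀ y)) (hm₁ : Integrable (fun y => y * f₁ y))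
    (htrim : ∀ α ∈ Ioo (0:ℝ) 1, trimMean f₁ α - trimMean f₀ α = Δ) :
    (∀ α ∈ Ioo (0:ℝ) 1, quant (cdfOf f₀) α = quant (cdfOf f₁) α - Δ) ∧
    (∀ᵐ y ∂(volume : Measure ℝ), f₀ y = f₁ (y + Δ)) := by
  classical
  have hfi₀ := Stmt6Aux.integrable_of_one hf₀1
  have hfi₁ := Stmt6Aux.integrable_of_one hf₁1
  -- Step 1: equality of differences of tail integrals
  have hT : ∀ α ∈ Ioo (0:ℝ) 1,
      (∫ y in Ioi (quant (cdfOf f₁) α), y * f₁ y)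
        - (∫ y in Ioi (quant (cdfOf f₀) α), y * f₀ y) = Δ * (1 - α) := by
    intro α hα
    have h := htrim α hα
    have h1 : (0:ℝ) < 1 - α := by linarith [hα.2]
    unfold trimMean at h
    field_simp at h
    linarith
  -- Step 2: key two-sided inequality
  have key : ∀ α β : ℝ, α ∈ Ioo (0:ℝ) 1 → β ∈ Ioo (0:ℝ) 1 → α < β →
      quant (cdfOf f₁) α - quant (cdfOf f₀) β ≤ Δ ∧
      Δ ≤ quant (cdfOf f₁) β - quant (cdfOf f₀) α := by
    intro α β hα hβ hab
    obtain ⟨hb1l, hb1r⟩ := Stmt6Aux.key_bounds hf₁0 hf₁1 hm₁ hα hβ hab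
    obtain ⟨hb0l, hb0r⟩ := Stmt6Aux.key_bounds hf₀0 hf₀1 hm₀ hα hβ hab
    have hTα := hT α hα
    have hTβ := hT β hβ
    have hpos : (0:ℝ) < β - α := by linarith
    constructor
    · nlinarith
    · nlinarith
  -- Step 3: quantile shift
  have hquant : ∀ β ∈ Ioo (0:ℝ) 1, quant (cdfOf f₀) β = quant (cdfOf f₁) β - Δ := by
    intro β hβ
    have hle : quant (cdfOf f₁) β - quant (cdfOf f₀) β ≤ Δ := by
      by_contra h
      push_neg at h
      set ε := quant (cdfOf f₁) β - quant (cdfOf f₀) β - Δ with hε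
      have hε0 : 0 < ε := by linarith
      obtain ⟨α, hαmem, hαq⟩ := Stmt6Aux.quant_near_left hf₁0 hf₁1 hβ hε0
      have hαIoo : α ∈ Ioo (0:ℝ) 1 := ⟨hαmem.1, hαmem.2.trans hβ.2⟩
      have := (key α β hαIoo hβ hαmem.2).1
      linarith
    have hge : Δ ≤ quant (cdfOf f₁) β - quant (cdfOf f₀) β := by
      by_contra h
      push_neg at h
      set ε := Δ - (quant (cdfOf f₁) β - quant (cdfOf f₀) β) with hε
      have hε0 : 0 < ε := by linarith
      obtain ⟨α, hαmem, hαq⟩ := Stmt6Aux.quant_near_left hf₀0 hf₀1 hβ hε0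
      have hαIoo : α ∈ Ioo (0:ℝ) 1 := ⟨hαmem.1, hαmem.2.trans hβ.2⟩
      have := (key α β hαIoo hβ hαmem.2).2
      linarith
    linarith
  refine ⟨hquant, ?_⟩
  -- Step 4: equality of CDFs
  have hF : ∀ y : ℝ, cdfOf f₀ y = cdfOf f₁ (y + Δ) := by
    intro y
    have hiff : ∀ α ∈ Ioo (0:ℝ) 1, (α ≤ cdfOf f₀ y ↔ α ≤ cdfOf f₁ (y + Δ)) := by
      intro α hα
      rw [← Stmt6Aux.quant_le_iff hf₀0 hf₀1 hα, ← Stmt6Aux.quant_le_iff hf₁0 hf₁1 hα,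
        hquant α hα, sub_le_iff_le_add]
    by_contra hne
    rcases lt_or_gt_of_ne hne with hlt | hlt
    · obtain ⟨α, ha1, ha2⟩ := exists_between hlt
      have hα : α ∈ Ioo (0:ℝ) 1 :=
        ⟨lt_of_le_of_lt (Stmt6Aux.cdf_nonneg hf₀0 y) ha1,
          lt_of_lt_of_le ha2 (Stmt6Aux.cdf_le_one hf₁0 hf₁1 (y + Δ))⟩
      exact absurd ((hiff α hα).2 ha2.le) (not_le.2 ha1)
    · obtain ⟨α, ha1, ha2⟩ := exists_between hlt
      have hα : α ∈ Ioo (0:ℝ) 1 :=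
        ⟨lt_of_le_of_lt (Stmt6Aux.cdf_nonneg hf₁0 (y + Δ)) ha1,
          lt_of_lt_of_le ha2 (Stmt6Aux.cdf_le_one hf₀0 hf₀1 y)⟩
      exact absurd ((hiff α hα).1 ha2.le) (not_le.2 ha1)
  -- Step 5: translate
  set g₁ : ℝ → ℝ := fun t => f₁ (t + Δ) with hg₁
  have hg₁i : Integrable g₁ := by
    have := hfi₁.comp_add_right Δ
    exact this
  have htrans : ∀ y : ℝ, cdfOf f₁ (y + Δ) = ∫ t in Iic y, g₁ t := by
    intro y
    have hind : ∀ t : ℝ, (Iic (y + Δ)).indicator f₁ (t + Δ) = (Iic y).indicator g₁ t := by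
      intro t
      by_cases ht : t ≤ y
      · rw [indicator_of_mem (by simp [ht] : t + Δ ∈ Iic (y + Δ)),
          indicator_of_mem (by simpa using ht)]
      · rw [indicator_of_notMem (by simpa using ht),
          indicator_of_notMem (by simpa using ht)]
    calc cdfOf f₁ (y + Δ) = ∫ t, (Iic (y + Δ)).indicator f₁ t := by
          rw [cdfOf, integral_indicator measurableSet_Iic]
    _ = ∫ t, (Iic (y + Δ)).indicator f₁ (t + Δ) :=
          (integral_add_right_eq_self ((Iic (y + Δ)).indicator f₁) Δ).symm
    _ = ∫ t, (Iic y).indicator g₁ t := by simp_rw [hind]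
    _ = ∫ t in Iic y, g₁ t := integral_indicator measurableSet_Iic
  -- Step 6: a.e. equality of densities via withDensity measures
  have hg₁0 : ∀ t, 0 ≤ g₁ t := fun t => hf₁0 (t + Δ)
  set μ₀ : Measure ℝ := volume.withDensity fun x => ENNReal.ofReal (f₀ x) with hμ₀
  set μ₁ : Measure ℝ := volume.withDensity fun x => ENNReal.ofReal (g₁ x) with hμ₁
  have haem₀ : AEMeasurable (fun x => ENNReal.ofReal (f₀ x)) (volume : Measure ℝ) :=
    ENNReal.measurable_ofReal.comp_aemeasurable hfi₀.aemeasurable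
  have haem₁ : AEMeasurable (fun x => ENNReal.ofReal (g₁ x)) (volume : Measure ℝ) :=
    ENNReal.measurable_ofReal.comp_aemeasurable hg₁i.aemeasurable
  have hIic : ∀ a : ℝ, μ₀ (Iic a) = μ₁ (Iic a) := by
    intro a
    rw [hμ₀, hμ₁, withDensity_apply _ measurableSet_Iic, withDensity_apply _ measurableSet_Iic,
      ← ofReal_integral_eq_lintegral_ofReal hfi₀.integrableOn
        (ae_of_all _ fun y => hf₀0 y),
      ← ofReal_integral_eq_lintegral_ofReal hg₁i.integrableOn
        (ae_of_all _ fun y => hg₁0 y)]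
    congr 1
    calc (∫ y in Iic a, f₀ y) = cdfOf f₀ a := rfl
    _ = cdfOf f₁ (a + Δ) := hF a
    _ = ∫ t in Iic a, g₁ t := htrans a
  have hfin : IsFiniteMeasure μ₀ := by
    constructor
    rw [hμ₀, withDensity_apply _ MeasurableSet.univ, Measure.restrict_univ,
      ← ofReal_integral_eq_lintegral_ofReal hfi₀ (ae_of_all _ fun y => hf₀0 y)]
    exact ENNReal.ofReal_lt_top
  have hμeq : μ₀ = μ₁ := Measure.ext_of_Iic μ₀ μ₁ hIic
  rw [hμ₀, hμ₁, withDensity_eq_iff_of_sigmaFinite haem₀ haem₁] at hμeq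
  filter_upwards [hμeq] with y hy
  have := (ENNReal.ofReal_eq_ofReal_iff (hf₀0 y) (hg₁0 y)).1 hy
  exact this
end

section
/- Let Y₁ = Y₀ + Δ with Y₀ absolutely continuous with finite mean, and let R₁, R₀ be missingness indicators each independent of the respective outcome (MCAR) with equal missingness probability p < α in both arms. Define composite outcomes U_a equal to Y_a if R_a = 1 and to a constant below the essential infimum of Y_a otherwise. Then the difference of composite trimmed means at level α equals Δ: E[U₁ | U₁ > F_{U₁}^{-1}(α)] − E[U₀ | U₀ > F_{U₀}^{-1}(α)] = Δ. -/
/-!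
Write `α' = (α - p) / (1 - p)`. For `x ≥ c` the composite outcome satisfies
`P(U ≤ x) = p + (1 - p) F_Y(x)`, so the `α`-quantile of `U` is the `α'`-quantile `q` of `Y`.
As `q ≥ c`, the event `U > q` is `{Y > q} ∩ {R = true}`, and by independence the factor
`P(R = true)` cancels from the trimmed mean, which becomes `E[Y | Y > q]`. Both arms use the same
`α'`, the `α'`-quantile of `Y₀ + Δ` is `q₀ + Δ`, and `E[Y₀ + Δ | Y₀ > q₀] = E[Y₀ | Y₀ > q₀] + Δ`.
The law of `Y₀` has a density, so it is atomless and `P(Y₀ > q₀) ≥ 1 - α' > 0`: no conditional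
mean is a junk `0 / 0`.
-/

open MeasureTheory ProbabilityTheory Set

open Filter Topology

lemma adjusted_level_mem_Ioo {p α : ℝ} (hpα : p < α) (hα : α < 1) :
    (α - p) / (1 - p) ∈ Ioo 0 1 :=
  ⟨div_pos (by linarith) (by linarith), (div_lt_one (by linarith)).2 (by linarith)⟩

section Quantile

variable {F : ℝ → ℝ} {β : ℝ}

lemma quant_comp_sub_const (hne : {x | β ≤ F x}.Nonempty) (hbdd : BddBelow {x | β ≤ F x})
    (Δ : ℝ) : quant (fun x => F (x - Δ)) β = quant F β + Δ := by
  have himg : {x | β ≤ F (x - Δ)} = OrderIso.addRight Δ '' {x | β ≤ F x} := by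
    ext x
    simp [OrderIso.addRight_apply, sub_eq_add_neg]
  rw [quant, quant, himg, ← OrderIso.map_csInf' _ hne hbdd, OrderIso.addRight_apply]

lemma apply_quant_le (hbdd : BddBelow {x | β ≤ F x})
    (hF : ContinuousWithinAt F (Iio (quant F β)) (quant F β)) : F (quant F β) ≤ β :=
  le_of_tendsto hF (eventually_nhdsWithin_of_forall fun _ hx =>
    (not_le.1 (notMem_of_lt_csInf (s := {x | β ≤ F x}) hx hbdd)).le)

end Quantile

lemma continuousWithinAt_Iio_cdf (ν : Measure ℝ) [IsProbabilityMeasure ν]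
    [NullSingletonClass ν] (x : ℝ) : ContinuousWithinAt (cdf ν) (Iio x) x := by
  rw [(monotone_cdf ν).continuousWithinAt_Iio_iff_leftLim_eq]
  have h := (cdf ν).measure_singleton x
  rw [measure_cdf, measure_singleton, eq_comm, ENNReal.ofReal_eq_zero, sub_nonpos] at h
  exact le_antisymm ((monotone_cdf ν).leftLim_le le_rfl) h

lemma setOf_le_cdf_nonempty (ν : Measure ℝ) {β : ℝ} (hβ : β < 1) :
    {x | β ≤ cdf ν x}.Nonempty :=
  ((tendsto_cdf_atTop ν).eventually_const_le hβ).exists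

section Cdf

variable {Ω : Type*} [MeasurableSpace Ω] {μ : Measure Ω} [IsProbabilityMeasure μ]
  {Y : Ω → ℝ} {β c : ℝ}

lemma cdf_map_apply (hY : Measurable Y) (x : ℝ) :
    cdf (μ.map Y) x = (μ {ω | Y ω ≤ x}).toReal := by
  have := Measure.isProbabilityMeasure_map (μ := μ) hY.aemeasurable
  rw [cdf_eq_real, measureReal_def, Measure.map_apply hY measurableSet_Iic]
  rfl

lemma cdf_map_add_const (hY : Measurable Y) (Δ : ℝ) :
    ⇑(cdf (μ.map fun ω => Y ω + Δ)) = fun x => cdf (μ.map Y) (x - Δ) := by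
  ext x
  simp only [cdf_map_apply (hY.add_const Δ), cdf_map_apply hY, ← le_sub_iff_add_le]

lemma le_of_le_cdf_map (hY : Measurable Y) (hc : ∀ᵐ ω ∂μ, c ≤ Y ω) (hβ : 0 < β) {x : ℝ}
    (hx : β ≤ cdf (μ.map Y) x) : c ≤ x := by
  by_contra! hxc
  have hnull : μ {ω | Y ω ≤ x} = 0 :=
    measure_mono_null (fun _ hω => not_le.2 (lt_of_le_of_lt hω hxc)) (ae_iff.1 hc)
  rw [cdf_map_apply hY, hnull, ENNReal.toReal_zero] at hx
  linarith

lemma bddBelow_setOf_le_cdf_map (hY : Measurable Y) (hc : ∀ᵐ ω ∂μ, c ≤ Y ω) (hβ : 0 < β) :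
    BddBelow {x | β ≤ cdf (μ.map Y) x} :=
  ⟨c, fun _ => le_of_le_cdf_map hY hc hβ⟩

lemma le_quant_cdf_map (hY : Measurable Y) (hc : ∀ᵐ ω ∂μ, c ≤ Y ω) (hβ : β ∈ Ioo 0 1) :
    c ≤ quant (cdf (μ.map Y)) β :=
  le_csInf (setOf_le_cdf_nonempty _ hβ.2) fun _ => le_of_le_cdf_map hY hc hβ.1

lemma measure_quant_cdf_map_lt_ne_zero [NullSingletonClass (μ.map Y)] (hY : Measurable Y)
    (hbdd : BddBelow {x | β ≤ cdf (μ.map Y) x}) (hβ : β < 1) :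
    μ {ω | quant (cdf (μ.map Y)) β < Y ω} ≠ 0 := by
  have := Measure.isProbabilityMeasure_map (μ := μ) hY.aemeasurable
  set q := quant (cdf (μ.map Y)) β
  have hq : cdf (μ.map Y) q < 1 :=
    (apply_quant_le hbdd (continuousWithinAt_Iio_cdf _ q)).trans_lt hβ
  have hcompl : {ω | q < Y ω} = {ω | Y ω ≤ q}ᶜ := by ext; simp
  rw [cdf_map_apply hY] at hq
  rw [← measureReal_ne_zero_iff, hcompl,
    probReal_compl_eq_one_sub (s := {ω | Y ω ≤ q}) (hY measurableSet_Iic), measureReal_def]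
  linarith

end Cdf

section Composite

variable {Ω : Type*} [MeasurableSpace Ω] {μ : Measure Ω} [IsProbabilityMeasure μ]
  {Y : Ω → ℝ} {R : Ω → Bool} {c : ℝ}

lemma toReal_measure_composite_le (hR : Measurable R) (hind : IndepFun Y R μ)
    {x : ℝ} (hcx : c ≤ x) :
    (μ {ω | (if R ω then Y ω else c) ≤ x}).toReal =
      (μ {ω | R ω = false}).toReal + (μ {ω | R ω = true}).toReal * (μ {ω | Y ω ≤ x}).toReal := by
  have hset : {ω | (if R ω then Y ω else c) ≤ x} =
      (Y ⁻¹' Iic x ∩ R ⁻¹' {true}) ∪ {ω | R ω = false} := by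
    ext ω
    cases h : R ω <;> simp [h, hcx]
  have hdisj : Disjoint (Y ⁻¹' Iic x ∩ R ⁻¹' {true}) {ω | R ω = false} :=
    disjoint_left.2 fun ω h1 h2 => by simp_all
  rw [hset, measure_union hdisj (hR (measurableSet_singleton false)),
    hind.measure_inter_preimage_eq_mul _ _ measurableSet_Iic (measurableSet_singleton true),
    ENNReal.toReal_add (by finiteness) (by finiteness), ENNReal.toReal_mul, add_comm, mul_comm]
  rfl

lemma toReal_measure_true_eq_one_sub {p : ℝ} (hR : Measurable R)
    (hp : (μ {ω | R ω = false}).toReal = p) :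
    (μ {ω | R ω = true}).toReal = 1 - p := by
  have hcompl : {ω | R ω = true} = {ω | R ω = false}ᶜ := by ext; simp
  rw [← measureReal_def, hcompl,
    probReal_compl_eq_one_sub (s := {ω | R ω = false}) (hR (measurableSet_singleton false)),
    measureReal_def, hp]

lemma quant_composite (hY : Measurable Y) (hR : Measurable R) (hind : IndepFun Y R μ)
    (hc : ∀ᵐ ω ∂μ, c ≤ Y ω) {p α : ℝ} (hp : (μ {ω | R ω = false}).toReal = p) (hpα : p < α)
    (hp1 : p < 1) :
    quant (fun x => (μ {ω | (if R ω then Y ω else c) ≤ x}).toReal) α =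
      quant (cdf (μ.map Y)) ((α - p) / (1 - p)) := by
  have hp0 : 0 ≤ p := hp ▸ ENNReal.toReal_nonneg
  unfold quant
  congr 1
  ext x
  simp only [mem_ofPred_eq]
  rcases lt_or_ge x c with hxc | hcx
  · have hnull : μ {ω | (if R ω then Y ω else c) ≤ x} = 0 := by
      refine measure_mono_null (fun ω hω => ?_) (ae_iff.1 hc)
      simp only [mem_ofPred_eq] at hω ⊢
      split_ifs at hω <;> linarith
    rw [hnull, ENNReal.toReal_zero]
    exact iff_of_false (by linarith) fun h =>
      hxc.not_ge (le_of_le_cdf_map hY hc (div_pos (by linarith) (by linarith)) h)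
  · rw [toReal_measure_composite_le hR hind hcx, hp, toReal_measure_true_eq_one_sub hR hp,
      ← cdf_map_apply hY, div_le_iff₀ (by linarith)]
    constructor <;> intro h <;> linarith

lemma condMeanAbove_composite (hY : Measurable Y) (hR : Measurable R) (hind : IndepFun Y R μ)
    (hR1 : μ {ω | R ω = true} ≠ 0) {q : ℝ} (hcq : c ≤ q) :
    condMeanAbove μ (fun ω => if R ω then Y ω else c) q = condMeanAbove μ Y q := by
  set A := {ω | q < Y ω}
  set B := {ω | R ω = true}
  have mA : MeasurableSet A := hY measurableSet_Ioi
  have mB : MeasurableSet B := hR (measurableSet_singleton true)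
  have hAB : {ω | q < if R ω then Y ω else c} = A ∩ B := by
    ext ω
    cases hRω : R ω <;> simp [A, B, hRω, hcq]
  set g : ℝ → ℝ := (Ioi q).indicator id
  set h : Bool → ℝ := ({true} : Set Bool).indicator 1
  have hg : Measurable g := measurable_id.indicator measurableSet_Ioi
  have hh : Measurable h := measurable_const.indicator (measurableSet_singleton true)
  have hindicators : IndepFun (g ∘ Y) (h ∘ R) μ := hind.comp hg hh
  have hnum : ∫ ω in A ∩ B, (if R ω then Y ω else c) ∂μ = (∫ ω in A, Y ω ∂μ) * (μ B).toReal := by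
    calc ∫ ω in A ∩ B, (if R ω then Y ω else c) ∂μ
        = ∫ ω, (g ∘ Y) ω * (h ∘ R) ω ∂μ := by
          rw [← integral_indicator (mA.inter mB)]
          congr 1
          ext ω
          by_cases hω : q < Y ω <;> cases hRω : R ω <;> simp [A, B, g, h, indicator, hω, hRω]
      _ = (∫ ω in A, Y ω ∂μ) * (μ B).toReal := by
          rw [hindicators.integral_fun_mul_eq_mul_integral (hg.comp hY).aestronglyMeasurable
              (hh.comp hR).aestronglyMeasurable,
            ← integral_indicator mA, ← measureReal_def, ← integral_indicator_one mB]
          rfl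
  unfold condMeanAbove
  have hden : μ (A ∩ B) = μ A * μ B :=
    hind.measure_inter_preimage_eq_mul _ _ measurableSet_Ioi (measurableSet_singleton true)
  rw [hAB, hnum, hden, ENNReal.toReal_mul,
    mul_div_mul_right _ _ (ENNReal.toReal_ne_zero.2 ⟨hR1, measure_ne_top _ _⟩)]

lemma condMeanAbove_composite_quant (hY : Measurable Y) (hR : Measurable R)
    (hind : IndepFun Y R μ) (hc : ∀ᵐ ω ∂μ, c ≤ Y ω) {p α : ℝ}
    (hp : (μ {ω | R ω = false}).toReal = p) (hpα : p < α) (hα : α < 1) :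
    condMeanAbove μ (fun ω => if R ω then Y ω else c)
        (quant (fun x => (μ {ω | (if R ω then Y ω else c) ≤ x}).toReal) α) =
      condMeanAbove μ Y (quant (cdf (μ.map Y)) ((α - p) / (1 - p))) := by
  have hR1 : μ {ω | R ω = true} ≠ 0 := fun h => by
    have := toReal_measure_true_eq_one_sub hR hp
    rw [h, ENNReal.toReal_zero] at this
    linarith
  rw [quant_composite hY hR hind hc hp hpα (by linarith)]
  exact condMeanAbove_composite hY hR hind hR1
    (le_quant_cdf_map hY hc (adjusted_level_mem_Ioo hpα hα))

end Composite

lemma condMeanAbove_add_const {Ω : Type*} [MeasurableSpace Ω] {μ : Measure Ω} [IsFiniteMeasure μ]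
    {X : Ω → ℝ} {q : ℝ} (hX : Integrable X μ) (hq : μ {ω | q < X ω} ≠ 0) (Δ : ℝ) :
    condMeanAbove μ (fun ω => X ω + Δ) (q + Δ) = condMeanAbove μ X q + Δ := by
  have hset : {ω | q + Δ < X ω + Δ} = {ω | q < X ω} := by simp
  unfold condMeanAbove
  rw [hset, integral_add hX.integrableOn (integrable_const Δ), setIntegral_const, smul_eq_mul,
    measureReal_def, add_div,
    mul_div_cancel_left₀ _ (ENNReal.toReal_ne_zero.2 ⟨hq, measure_ne_top _ _⟩)]

section Density

variable {Ω : Type*} [MeasurableSpace Ω] {μ : Measure Ω} {Y : Ω → ℝ} {f : ℝ → ℝ}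

lemma integrableOn_Iic_of_cdf_eq [IsProbabilityMeasure μ] (hY : Measurable Y)
    (hd : ∀ x, μ {ω | Y ω ≤ x} = ENNReal.ofReal (∫ y in Iic x, f y)) (x : ℝ) :
    IntegrableOn f (Iic x) := by
  by_contra hx
  have hzero : ∀ y ≥ x, cdf (μ.map Y) y = 0 := fun y hy => by
    have hundef : ∫ z in Iic y, f z = 0 :=
      integral_undef fun h => hx (IntegrableOn.mono_set h (Iic_subset_Iic.2 hy))
    rw [cdf_map_apply hY, hd, hundef, ENNReal.ofReal_zero, ENNReal.toReal_zero]
  have hlim : Tendsto (cdf (μ.map Y)) atTop (𝓝 0) :=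
    tendsto_const_nhds.congr' ((eventually_ge_atTop x).mono fun y hy => (hzero y hy).symm)
  exact zero_ne_one (tendsto_nhds_unique hlim (tendsto_cdf_atTop _))

lemma map_eq_withDensity_of_cdf_eq [IsProbabilityMeasure μ] (hY : Measurable Y) (hf : ∀ y, 0 ≤ f y)
    (hd : ∀ x, μ {ω | Y ω ≤ x} = ENNReal.ofReal (∫ y in Iic x, f y)) :
    μ.map Y = volume.withDensity fun y => ENNReal.ofReal (f y) := by
  have := Measure.isProbabilityMeasure_map (μ := μ) hY.aemeasurable
  refine Measure.ext_of_Iic _ _ fun x => ?_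
  rw [Measure.map_apply hY measurableSet_Iic, withDensity_apply _ measurableSet_Iic,
    ← ofReal_integral_eq_lintegral_ofReal (integrableOn_Iic_of_cdf_eq hY hd x)
      (Eventually.of_forall hf)]
  exact hd x

lemma aemeasurable_of_integrable_id_mul (h : Integrable fun y => y * f y) : AEMeasurable f := by
  refine (measurable_inv.aemeasurable.mul h.aemeasurable).congr ?_
  filter_upwards [compl_mem_ae_iff.2 (Real.volume_singleton (a := 0))] with y hy
  simp only [Pi.mul_apply]
  field_simp [show y ≠ 0 from hy]

lemma integrable_of_map_eq_withDensity (hY : Measurable Y) (hf : ∀ y, 0 ≤ f y)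
    (hmap : μ.map Y = volume.withDensity fun y => ENNReal.ofReal (f y))
    (hmean : Integrable fun y => y * f y) : Integrable Y μ := by
  have hid : Integrable id (μ.map Y) := by
    rw [hmap, integrable_withDensity_iff_integrable_smul₀'
      (aemeasurable_of_integrable_id_mul hmean).ennreal_ofReal
      (Eventually.of_forall fun _ => ENNReal.ofReal_lt_top)]
    refine hmean.congr (Eventually.of_forall fun y => ?_)
    simp [ENNReal.toReal_ofReal (hf y), mul_comm]
  exact (integrable_map_measure aestronglyMeasurable_id hY.aemeasurable).1 hid

end Density

theorem stmt16 {Ω : Type*} [MeasurableSpace Ω] (μ : Measure Ω) [IsProbabilityMeasure μ]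
    (Y₀ : Ω → ℝ) (Δ : ℝ) (Y₁ : Ω → ℝ) (hY₁def : Y₁ = fun ω => Y₀ ω + Δ)
    (R₁ R₀ : Ω → Bool) (f₀ : ℝ → ℝ) (α p c₁ c₀ : ℝ)
    (hY₀ : Measurable Y₀) (hR₁ : Measurable R₁) (hR₀ : Measurable R₀)
    (hf₀0 : ∀ y, 0 ≤ f₀ y)
    (hY₀d : ∀ x, μ {ω | Y₀ ω ≤ x} = ENNReal.ofReal (∫ y in Iic x, f₀ y))
    (hmean : Integrable (fun y => y * f₀ y))
    (hindep₁ : IndepFun Y₁ R₁ μ) (hindep₀ : IndepFun Y₀ R₀ μ)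
    (hp₁ : (μ {ω | R₁ ω = false}).toReal = p)
    (hp₀ : (μ {ω | R₀ ω = false}).toReal = p)
    (hα : α ∈ Ioo (0:ℝ) 1) (hpα : p < α)
    (hc₁ : ∀ᵐ ω ∂μ, c₁ < Y₁ ω) (hc₀ : ∀ᵐ ω ∂μ, c₀ < Y₀ ω)
    (U₁ U₀ : Ω → ℝ)
    (hU₁ : U₁ = fun ω => if R₁ ω then Y₁ ω else c₁)
    (hU₀ : U₀ = fun ω => if R₀ ω then Y₀ ω else c₀)
    (FU₁ FU₀ : ℝ → ℝ)
    (hFU₁ : FU₁ = fun x => (μ {ω | U₁ ω ≤ x}).toReal)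
    (hFU₀ : FU₀ = fun x => (μ {ω | U₀ ω ≤ x}).toReal) :
    condMeanAbove μ U₁ (quant FU₁ α) - condMeanAbove μ U₀ (quant FU₀ α) = Δ := by
  subst hFU₁ hFU₀ hU₁ hU₀ hY₁def
  have hlaw := map_eq_withDensity_of_cdf_eq hY₀ hf₀0 hY₀d
  have : NullSingletonClass (μ.map Y₀) := by rw [hlaw]; infer_instance
  have hint := integrable_of_map_eq_withDensity hY₀ hf₀0 hlaw hmean
  set α' := (α - p) / (1 - p)
  have hα' : α' ∈ Ioo 0 1 := adjusted_level_mem_Ioo hpα hα.2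
  have hbdd := bddBelow_setOf_le_cdf_map hY₀ (hc₀.mono fun _ h => h.le) hα'.1
  have hq : quant (cdf (μ.map fun ω => Y₀ ω + Δ)) α' = quant (cdf (μ.map Y₀)) α' + Δ := by
    rw [cdf_map_add_const hY₀]
    exact quant_comp_sub_const (setOf_le_cdf_nonempty _ hα'.2) hbdd Δ
  rw [condMeanAbove_composite_quant (hY₀.add_const Δ) hR₁ hindep₁
      (hc₁.mono fun _ h => h.le) hp₁ hpα hα.2,
    condMeanAbove_composite_quant hY₀ hR₀ hindep₀ (hc₀.mono fun _ h => h.le) hp₀ hpα hα.2,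
    hq, condMeanAbove_add_const hint (measure_quant_cdf_map_lt_ne_zero hY₀ hbdd hα'.2)]
  ring
end

section
/- Let F be a continuous strictly increasing CDF on ℝ with density f and finite mean. Then the function α ↦ E[Y | Y > F^{-1}(α)] is continuous on (0,1) and differentiable wherever f(F^{-1}(α)) > 0, with derivative d/dα E[Y | Y > F^{-1}(α)] = (E[Y | Y > F^{-1}(α)] − F^{-1}(α)) / (1 − α). -/
open MeasureTheory Set

open Filter Topology

/-! Put `K α = ∫ y in Ioi (Finv α), y * f y`, so that `T α = (1 - α)⁻¹ * K α`. For `α < β`,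
`K α - K β` is the first moment of `f` over `(Finv α, Finv β]`, a slab of mass `β - α`, hence it
lies between `Finv α * (β - α)` and `Finv β * (β - α)`. The difference quotients of `K` are thus
squeezed between `-Finv β` and `-Finv α`, and `Finv`, a right inverse of the strictly increasing
`F`, is continuous; so `K' = -Finv`, and the quotient rule gives `T'`. -/

theorem StrictMono.continuousAt_of_rightInvOn {α β : Type*} [LinearOrder α] [TopologicalSpace α]
    [OrderTopology α] [LinearOrder β] [TopologicalSpace β] [OrderTopology β]
    {F : β → α} {g : α → β} {s : Set α} {x : α} (hF : StrictMono F) (hg : RightInvOn g F s)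
    (hs : s ∈ 𝓝 x) : ContinuousAt g x := by
  have hx := mem_of_mem_nhds hs
  refine tendsto_order.2 ⟨fun l hl => ?_, fun u hu => ?_⟩
  · have hFl : F l < x := hg hx ▸ hF hl
    filter_upwards [hs, eventually_gt_nhds hFl] with y hys hy
    exact hF.lt_iff_lt.1 (by rwa [hg hys])
  · have hFu : x < F u := hg hx ▸ hF hu
    filter_upwards [hs, eventually_lt_nhds hFu] with y hys hy
    exact hF.lt_iff_lt.1 (by rwa [hg hys])

theorem StrictMono.strictMonoOn_of_rightInvOn {α β : Type*} [LinearOrder α] [LinearOrder β]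
    {F : β → α} {g : α → β} {s : Set α} (hF : StrictMono F) (hg : RightInvOn g F s) :
    StrictMonoOn g s := fun a ha b hb hab =>
  hF.lt_iff_lt.1 (by rwa [hg ha, hg hb])

theorem hasDerivAt_of_slope_mem_uIcc {K h : ℝ → ℝ} {x : ℝ} (hh : ContinuousAt h x)
    (hK : ∀ᶠ y in 𝓝[≠] x, slope K x y ∈ uIcc (h x) (h y)) : HasDerivAt K (h x) x := by
  rw [hasDerivAt_iff_tendsto_slope, tendsto_iff_dist_tendsto_zero]
  have hlim : Tendsto (fun y => dist (h y) (h x)) (𝓝[≠] x) (𝓝 0) :=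
    (tendsto_iff_dist_tendsto_zero.1 hh).mono_left nhdsWithin_le_nhds
  refine squeeze_zero' (Eventually.of_forall fun _ => dist_nonneg) ?_ hlim
  filter_upwards [hK] with y hy
  exact abs_sub_left_of_mem_uIcc hy

theorem HasDerivAt.inv_one_sub_mul {K : ℝ → ℝ} {K' x : ℝ} (hK : HasDerivAt K K' x) (hx : x ≠ 1) :
    HasDerivAt (fun y => (1 - y)⁻¹ * K y) (((1 - x)⁻¹ * K x + K') / (1 - x)) x := by
  have hx' : 1 - x ≠ 0 := sub_ne_zero.2 hx.symm
  refine ((((hasDerivAt_id' x).const_sub 1).fun_inv hx').mul hK).congr_deriv ?_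
  field_simp

theorem intervalIntegral_eq_cdfOf_sub {f : ℝ → ℝ} (hf : Integrable f) {a b : ℝ} :
    ∫ y in a..b, f y = cdfOf f b - cdfOf f a :=
  (intervalIntegral.integral_Iic_sub_Iic hf.integrableOn hf.integrableOn).symm

theorem intervalIntegral_id_mul_mem_Icc {f : ℝ → ℝ} {a b : ℝ} (hab : a ≤ b)
    (hf0 : ∀ y ∈ Icc a b, 0 ≤ f y) (hf : IntervalIntegrable f volume a b)
    (hyf : IntervalIntegrable (fun y => y * f y) volume a b) :
    ∫ y in a..b, y * f y ∈ Icc (a * ∫ y in a..b, f y) (b * ∫ y in a..b, f y) := by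
  rw [← intervalIntegral.integral_const_mul, ← intervalIntegral.integral_const_mul]
  exact ⟨intervalIntegral.integral_mono_on hab (hf.const_mul a) hyf
      fun y hy => mul_le_mul_of_nonneg_right hy.1 (hf0 y hy),
    intervalIntegral.integral_mono_on hab hyf (hf.const_mul b)
      fun y hy => mul_le_mul_of_nonneg_right hy.2 (hf0 y hy)⟩

noncomputable def tailFirstMoment (f : ℝ → ℝ) (a : ℝ) : ℝ := ∫ y in Ioi a, y * f y

section

variable {f g : ℝ → ℝ} {s : Set ℝ}

theorem slope_tailFirstMoment_comp_mem_Icc (hf0 : ∀ y, 0 ≤ f y) (hf : Integrable f)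
    (hyf : Integrable fun y => y * f y) (hg : RightInvOn g (cdfOf f) s) (hg_mono : MonotoneOn g s)
    {a b : ℝ} (ha : a ∈ s) (hb : b ∈ s) (hab : a < b) :
    slope (fun c => tailFirstMoment f (g c)) a b ∈ Icc (-g b) (-g a) := by
  have hgab : g a ≤ g b := hg_mono ha hb hab.le
  have hdiff : tailFirstMoment f (g a) - tailFirstMoment f (g b) = ∫ y in g a..g b, y * f y :=
    intervalIntegral.integral_Ioi_sub_Ioi hyf.integrableOn hgab
  have hmass : ∫ y in g a..g b, f y = b - a := by
    rw [intervalIntegral_eq_cdfOf_sub hf, hg hb, hg ha]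
  have hbounds := intervalIntegral_id_mul_mem_Icc hgab (fun y _ => hf0 y) hf.intervalIntegrable
    hyf.intervalIntegrable
  rw [hmass, ← hdiff] at hbounds
  have hba : 0 < b - a := sub_pos.2 hab
  rw [slope_def_field, mem_Icc, le_div_iff₀ hba, div_le_iff₀ hba]
  constructor <;> linarith [hbounds.1, hbounds.2]

theorem hasDerivAt_tailFirstMoment_comp (hf0 : ∀ y, 0 ≤ f y) (hf : Integrable f)
    (hyf : Integrable fun y => y * f y) (hF : StrictMono (cdfOf f)) (hg : RightInvOn g (cdfOf f) s)
    {x : ℝ} (hs : s ∈ 𝓝 x) :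
    HasDerivAt (fun c => tailFirstMoment f (g c)) (-g x) x := by
  have hg_mono := (hF.strictMonoOn_of_rightInvOn hg).monotoneOn
  refine hasDerivAt_of_slope_mem_uIcc (h := fun c => -g c)
    (hF.continuousAt_of_rightInvOn hg hs).neg ?_
  have hx := mem_of_mem_nhds hs
  filter_upwards [nhdsWithin_le_nhds hs, self_mem_nhdsWithin] with y hy hyx
  rcases lt_or_gt_of_ne hyx with hlt | hgt
  · rw [slope_comm]
    exact Icc_subset_uIcc (slope_tailFirstMoment_comp_mem_Icc hf0 hf hyf hg hg_mono hy hx hlt)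
  · exact Icc_subset_uIcc' (slope_tailFirstMoment_comp_mem_Icc hf0 hf hyf hg hg_mono hx hy hgt)

end

theorem stmt17_general (f F Finv : ℝ → ℝ) (hF : F = cdfOf f)
    (hf0 : ∀ y, 0 ≤ f y) (hf1 : ∫ y, f y = 1)
    (hmean : Integrable (fun y => y * f y))
    (hFm : StrictMono F)
    (hFinv : ∀ α ∈ Ioo (0:ℝ) 1, F (Finv α) = α)
    (T : ℝ → ℝ) (hT : T = fun α => (1 - α)⁻¹ * ∫ y in Ioi (Finv α), y * f y) :
    ContinuousOn T (Ioo 0 1) ∧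
    ∀ α ∈ Ioo (0:ℝ) 1, 0 < f (Finv α) →
      HasDerivAt T ((T α - Finv α) / (1 - α)) α := by
  subst hF hT
  have hf : Integrable f := Integrable.of_integral_ne_zero (by simp [hf1])
  have hderiv : ∀ α ∈ Ioo (0:ℝ) 1, HasDerivAt (fun α => (1 - α)⁻¹ * tailFirstMoment f (Finv α))
      (((1 - α)⁻¹ * tailFirstMoment f (Finv α) - Finv α) / (1 - α)) α := fun α hα =>
    (hasDerivAt_tailFirstMoment_comp hf0 hf hmean hFm hFinv
      (isOpen_Ioo.mem_nhds hα)).inv_one_sub_mul hα.2.ne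
  exact ⟨fun α hα => (hderiv α hα).continuousAt.continuousWithinAt, fun α hα _ => hderiv α hα⟩

theorem stmt17 (f F Finv : ℝ → ℝ) (hF : F = cdfOf f)
    (hf0 : ∀ y, 0 ≤ f y) (hf1 : ∫ y, f y = 1)
    (hmean : Integrable (fun y => y * f y))
    (hFc : Continuous F) (hFm : StrictMono F)
    (hFinv : ∀ α ∈ Ioo (0:ℝ) 1, F (Finv α) = α)
    (T : ℝ → ℝ) (hT : T = fun α => (1 - α)⁻¹ * ∫ y in Ioi (Finv α), y * f y) :
    ContinuousOn T (Ioo 0 1) ∧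
    ∀ α ∈ Ioo (0:ℝ) 1, 0 < f (Finv α) →
      HasDerivAt T ((T α - Finv α) / (1 - α)) α :=
  stmt17_general f F Finv hF hf0 hf1 hmean hFm hFinv T hT
end
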